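/- Let τ_P, τ_Q > 0 with τ_Q > τ_P, let n ≥ 1, let (μ_i)_{i=1}^n be a real sequence, let k ∈ {1, …, n}, and fix observations x_i ∈ ℝ for all i ≠ k. Then there exists M > 0 such that whenever the k-th observation satisfies |x_k − μ_k| > M, the contaminated cumulative prequential delta Hyvärinen score is strictly negative: Σ_{i=1}^n [S_H(x_i; μ_i, τ_Q) − S_H(x_i; μ_i, τ_P)] < 0; i.e., a single sufficiently large additive outlier forces the Hyvärinen-score procedure to select the larger-variance model Q regardless of the remaining observations. -/

import Mathlib

/-- Log-score of an observation x under N(μ, σ²). -/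
noncomputable def logScore (x μ σ : ℝ) : ℝ :=
  (1 / 2) * Real.log (2 * Real.pi * σ ^ 2) + (x - μ) ^ 2 / (2 * σ ^ 2)

/-- Hyvärinen score of an observation x under N(μ, σ²). -/
noncomputable def hyvScore (x μ σ : ℝ) : ℝ :=
  -2 / σ ^ 2 + (x - μ) ^ 2 / σ ^ 4

/-
Each summand of the delta score is `A - c (x_i - μ_i)²` with `c = τ_P⁻⁴ - τ_Q⁻⁴ > 0`, so the
sum is at most `n A - c (x_k - μ_k)²`, and this is negative once `|x_k - μ_k|` is large.
-/

open Finset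

theorem hyvScore_sub_hyvScore (x μ σ τ : ℝ) :
    hyvScore x μ τ - hyvScore x μ σ =
      (2 / σ ^ 2 - 2 / τ ^ 2) - (1 / σ ^ 4 - 1 / τ ^ 4) * (x - μ) ^ 2 := by
  unfold hyvScore
  ring

theorem exists_pos_forall_lt_mul_sq (B : ℝ) {c : ℝ} (hc : 0 < c) :
    ∃ M > (0 : ℝ), ∀ t : ℝ, M < |t| → B < c * t ^ 2 := by
  refine ⟨|B| / c + 1, by positivity, fun t ht => ?_⟩
  have hM : 1 ≤ |B| / c + 1 := le_add_of_nonneg_left (by positivity)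
  have ht_lt_sq : |t| < t ^ 2 := by
    rw [← sq_abs]
    nlinarith
  calc B ≤ |B| := le_abs_self B
    _ < c * (|B| / c + 1) := by rw [mul_add, mul_div_cancel₀ _ hc.ne']; linarith
    _ < c * t ^ 2 := mul_lt_mul_of_pos_left (ht.trans ht_lt_sq) hc

theorem sum_sub_mul_sq_neg {ι : Type*} {s : Finset ι} {k : ι} (hk : k ∈ s) {a c : ℝ}
    (hc : 0 ≤ c) (y : ι → ℝ) (h : #s * a < c * y k ^ 2) :
    ∑ i ∈ s, (a - c * y i ^ 2) < 0 := by
  have hyk : y k ^ 2 ≤ ∑ i ∈ s, y i ^ 2 :=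
    single_le_sum (f := fun i => y i ^ 2) (fun i _ => sq_nonneg (y i)) hk
  rw [sum_sub_distrib, sum_const, nsmul_eq_mul, ← mul_sum]
  nlinarith

theorem outlier_forces_negative_cumulative_delta_hyv_general
    (τP τQ : ℝ) (hP : 0 < τP) (hQ : τP < τQ)
    (n : ℕ) (μ : ℕ → ℝ) (k : ℕ) (hk : k ∈ Finset.Icc 1 n) (x : ℕ → ℝ) :
    ∃ M > (0 : ℝ), ∀ xk : ℝ, M < |xk - μ k| →
      ∑ i ∈ Finset.Icc 1 n,
          (hyvScore (Function.update x k xk i) (μ i) τQ -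
            hyvScore (Function.update x k xk i) (μ i) τP) < 0 := by
  set A := 2 / τP ^ 2 - 2 / τQ ^ 2
  set c := 1 / τP ^ 4 - 1 / τQ ^ 4
  have hc : 0 < c := sub_pos.2 <| one_div_lt_one_div_of_lt (by positivity) <|
    pow_lt_pow_left₀ hQ hP.le (by norm_num)
  obtain ⟨M, hM, hM_large⟩ := exists_pos_forall_lt_mul_sq (#(Icc 1 n) * A) hc
  refine ⟨M, hM, fun xk hxk => ?_⟩
  simp only [hyvScore_sub_hyvScore]
  exact sum_sub_mul_sq_neg hk hc.le (fun i => Function.update x k xk i - μ i)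
    (by simpa using hM_large _ hxk)

theorem outlier_forces_negative_cumulative_delta_hyv
    (τP τQ : ℝ) (hP : 0 < τP) (hQ : τP < τQ)
    (n : ℕ) (hn : 1 ≤ n) (μ : ℕ → ℝ) (k : ℕ) (hk : k ∈ Finset.Icc 1 n) (x : ℕ → ℝ) :
    ∃ M > (0 : ℝ), ∀ xk : ℝ, M < |xk - μ k| →
      ∑ i ∈ Finset.Icc 1 n,
          (hyvScore (Function.update x k xk i) (μ i) τQ -
            hyvScore (Function.update x k xk i) (μ i) τP) < 0 :=
  outlier_forces_negative_cumulative_delta_hyv_general τP τQ hP hQ n μ k hk x
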